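/- Moore's partition refinement computes language equivalence on a deterministic weak Büchi automaton after rank-based preprocessing: if two states p, q of a DWA have the same Löding rank and for every finite word u ∈ Σ*, the states δ*(p,u) and δ*(q,u) have the same acceptance status, then p and q recognize the same ω-language. -/

import Mathlib

/-- A complete deterministic Büchi automaton over alphabet `A` with states `Q`. -/
structure DBA (Q A : Type) where
  init : Q
  step : Q → A → Q
  F : Set Q

namespace DBA

variable {Q A : Type}

/-- Extension of the transition function to finite words. -/
def stepList (M : DBA Q A) : Q → List A → Q
  | q, [] => q
  | q, a :: u => M.stepList (M.step q a) u

/-- `q` is reachable from `p`. -/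
def Reach (M : DBA Q A) (p q : Q) : Prop := ∃ u : List A, M.stepList p u = q

/-- `p` and `q` are in the same strongly connected component. -/
def SameSCC (M : DBA Q A) (p q : Q) : Prop := M.Reach p q ∧ M.Reach q p

/-- `q` lies on a cycle (i.e. its SCC is non-trivial). -/
def OnCycle (M : DBA Q A) (q : Q) : Prop := ∃ u : List A, u ≠ [] ∧ M.stepList q u = q

/-- Weakness: every SCC is entirely accepting or entirely rejecting. -/
def Weak (M : DBA Q A) : Prop := ∀ p q, M.SameSCC p q → (p ∈ M.F ↔ q ∈ M.F)

/-- The (unique) run on `w` starting in state `q`. -/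
def runFrom (M : DBA Q A) (q : Q) (w : ℕ → A) : ℕ → Q
  | 0 => q
  | n + 1 => M.step (M.runFrom q w n) (w n)

/-- Büchi acceptance from state `q`: the run visits `F` infinitely often. -/
def AcceptsFrom (M : DBA Q A) (q : Q) (w : ℕ → A) : Prop :=
  ∀ N, ∃ n, N ≤ n ∧ M.runFrom q w n ∈ M.F

/-- Büchi acceptance from the initial state. -/
def Accepts (M : DBA Q A) (w : ℕ → A) : Prop := M.AcceptsFrom M.init w

/-- The ω-language of state `q`. -/
def LangFrom (M : DBA Q A) (q : Q) : Set (ℕ → A) := {w | M.AcceptsFrom q w}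

/-- The ω-language of the automaton. -/
def Lang (M : DBA Q A) : Set (ℕ → A) := {w | M.Accepts w}

/-- `q` is an accepting sink. -/
def AcceptingSink (M : DBA Q A) (q : Q) : Prop := q ∈ M.F ∧ ∀ a, M.step q a = q

/-- Minimality: all states are reachable and no two distinct states are
language-equivalent. -/
def Minimal (M : DBA Q A) : Prop :=
  (∀ q, M.Reach M.init q) ∧ ∀ p q, M.LangFrom p = M.LangFrom q → p = q

/-- Product automaton with a chosen acceptance set. -/
def prod (M₁ : DBA Q A) {Q₂ : Type} (M₂ : DBA Q₂ A) (Fp : Set (Q × Q₂)) :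
    DBA (Q × Q₂) A :=
  ⟨(M₁.init, M₂.init), fun q a => (M₁.step q.1 a, M₂.step q.2 a), Fp⟩

/-- A ranking in the sense of Löding: constant on SCCs, non-increasing along
transitions, and with parity matching acceptance on states lying on cycles. -/
def IsRanking (M : DBA Q A) (r : Q → ℕ) : Prop :=
  (∀ p q, M.SameSCC p q → r p = r q) ∧
  (∀ q a, r (M.step q a) ≤ r q) ∧
  (∀ q, M.OnCycle q → (Even (r q) ↔ q ∈ M.F))

end DBA

/-- Recognizability by a (finite) deterministic weak Büchi automaton. -/
def DWARecognizable {A : Type} (L : Set (ℕ → A)) : Prop :=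
  ∃ (Q : Type) (_ : Fintype Q) (M : DBA Q A), M.Weak ∧ ∀ w, M.Accepts w ↔ w ∈ L

/-- Nondeterministic Büchi automata. -/
structure NBA (Q A : Type) where
  init : Set Q
  step : Q → A → Set Q
  F : Set Q

/-- Acceptance for nondeterministic Büchi automata. -/
def NBA.Accepts {Q A : Type} (M : NBA Q A) (w : ℕ → A) : Prop :=
  ∃ r : ℕ → Q, r 0 ∈ M.init ∧ (∀ n, r (n + 1) ∈ M.step (r n) (w n)) ∧
    ∀ N, ∃ n, N ≤ n ∧ r n ∈ M.F

/-- ω-regularity: recognizability by a finite nondeterministic Büchi automaton. -/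
def OmegaRegular {A : Type} (L : Set (ℕ → A)) : Prop :=
  ∃ (Q : Type) (_ : Fintype Q) (M : NBA Q A), ∀ w, M.Accepts w ↔ w ∈ L

/-- Guarantee languages: `W·Σ^ω` for a set `W` of finite words. -/
def IsGuaranteeLang {A : Type} (L : Set (ℕ → A)) : Prop :=
  ∃ W : Set (List A), L = {w | ∃ n : ℕ, (List.ofFn fun i : Fin n => w i) ∈ W}

/-- Safety languages: complements of guarantee languages. -/
def IsSafetyLang {A : Type} (L : Set (ℕ → A)) : Prop := IsGuaranteeLang Lᶜ

/-- Finite Boolean combinations (union, intersection, complement) of a family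
of languages. -/
inductive BoolCombOf {α : Type} (B : Set (Set α)) : Set α → Prop
  | base {L} : L ∈ B → BoolCombOf B L
  | compl {L} : BoolCombOf B L → BoolCombOf B Lᶜ
  | union {L₁ L₂} : BoolCombOf B L₁ → BoolCombOf B L₂ → BoolCombOf B (L₁ ∪ L₂)
  | inter {L₁ L₂} : BoolCombOf B L₁ → BoolCombOf B L₂ → BoolCombOf B (L₁ ∩ L₂)

theorem Filter.frequently_iff_exists_frequently_eq {α ι : Type*} [Finite α] {l : Filter ι}
    (f : ι → α) (P : α → Prop) : (∃ᶠ i in l, P (f i)) ↔ ∃ s, P s ∧ ∃ᶠ i in l, f i = s := by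
  simp only [← Filter.frequently_and_distrib_left, ← Filter.frequently_exists]
  exact Filter.frequently_congr <|
    .of_forall fun _ => ⟨fun h => ⟨_, h, rfl⟩, fun ⟨_, h, hs⟩ => hs ▸ h⟩

namespace DBA

variable {Q A : Type} (M : DBA Q A)

open Filter

theorem stepList_append (q : Q) (u v : List A) :
    M.stepList q (u ++ v) = M.stepList (M.stepList q u) v := by
  induction u generalizing q with
  | nil => rfl
  | cons a u ih => exact ih _

theorem runFrom_eq_stepList (q : Q) (w : ℕ → A) (n : ℕ) :
    M.runFrom q w n = M.stepList q (List.ofFn fun i : Fin n => w i) := by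
  induction n with
  | zero => rfl
  | succ n ih => rw [runFrom, ih, List.ofFn_succ', List.concat_eq_append, stepList_append]; rfl

theorem runFrom_add (q : Q) (w : ℕ → A) (m k : ℕ) :
    M.runFrom q w (m + k) = M.runFrom (M.runFrom q w m) (fun i => w (m + i)) k := by
  induction k with
  | zero => rfl
  | succ k ih => rw [← Nat.add_assoc, runFrom, runFrom, ih]

theorem onCycle_of_runFrom_eq {q s : Q} {w : ℕ → A} {m n : ℕ} (hmn : m < n)
    (hm : M.runFrom q w m = s) (hn : M.runFrom q w n = s) : M.OnCycle s := by
  refine ⟨List.ofFn fun i : Fin (n - m) => w (m + i), by simp; omega, ?_⟩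
  subst hm
  rw [← M.runFrom_eq_stepList _ fun i => w (m + i), ← runFrom_add, Nat.add_sub_cancel' hmn.le, hn]

theorem onCycle_of_frequently_runFrom_eq {q s : Q} {w : ℕ → A}
    (h : ∃ᶠ n in atTop, M.runFrom q w n = s) : M.OnCycle s := by
  obtain ⟨m, hm⟩ := h.exists
  obtain ⟨n, hmn, hn⟩ := frequently_atTop'.mp h m
  exact M.onCycle_of_runFrom_eq hmn hm hn

/-- Büchi acceptance is unchanged when `F` is replaced by any labelling that agrees with it on
states lying on a cycle, since these are the only states a run visits infinitely often. -/
theorem acceptsFrom_iff_frequently [Finite Q] {P : Q → Prop}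
    (hP : ∀ s, M.OnCycle s → (P s ↔ s ∈ M.F)) (q : Q) (w : ℕ → A) :
    M.AcceptsFrom q w ↔ ∃ᶠ n in atTop, P (M.runFrom q w n) := by
  rw [AcceptsFrom, ← frequently_atTop, frequently_iff_exists_frequently_eq,
    frequently_iff_exists_frequently_eq]
  refine exists_congr fun s => and_congr_left fun hs => ?_
  exact (hP s (M.onCycle_of_frequently_runFrom_eq hs)).symm

end DBA

theorem stmt16_general {Q A : Type} [Fintype Q] (M : DBA Q A)
    (r : Q → ℕ) (hr : M.IsRanking r) (p q : Q)
    (hmoore : ∀ u : List A, (Even (r (M.stepList p u)) ↔ Even (r (M.stepList q u)))) :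
    M.LangFrom p = M.LangFrom q := by
  ext w
  simp only [DBA.LangFrom, Set.mem_ofPred_eq, M.acceptsFrom_iff_frequently hr.2.2,
    M.runFrom_eq_stepList, hmoore]

/-- Moore's partition refinement after Löding's rank-based
preprocessing computes language equivalence: if two states of a DWA have the
same Löding rank and, for every finite word `u`, the states reached from them
by `u` have the same acceptance status (parity of the rank), then they
recognize the same ω-language. -/
theorem stmt16 {Q A : Type} [Fintype Q] (M : DBA Q A) (hw : M.Weak)
    (r : Q → ℕ) (hr : M.IsRanking r) (p q : Q) (hrank : r p = r q)
    (hmoore : ∀ u : List A, (Even (r (M.stepList p u)) ↔ Even (r (M.stepList q u)))) :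
    M.LangFrom p = M.LangFrom q :=
  stmt16_general M r hr p q hmoore
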